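/- Conformal factorization of the spherical kernel through the Cayley transform: for all u = (z,t) and v = (z',t') in ℂⁿ × ℝ, writing u⁻¹v = (z'−z, t'−t−2 Im⟨z,z'⟩), one has | 1 − ⟨𝒞(u), 𝒞(v)⟩ | = 2 · N(u⁻¹v)² · ((1+|z|²)² + t²)^{−1/2} · ((1+|z'|²)² + t'²)^{−1/2}, where ⟨ζ,η⟩ = ∑_{j=1}^{n+1} ζⱼ·conj(ηⱼ) for ζ, η ∈ ℂ^{n+1}. -/

import Mathlib

open Complex

noncomputable section

/-- Squared Euclidean norm `|z|²` of `z ∈ ℂⁿ`. -/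
def znormSq {n : ℕ} (z : Fin n → ℂ) : ℝ := ∑ j, Complex.normSq (z j)

/-- Group law of the Heisenberg group `ℍⁿ = ℂⁿ × ℝ`:
`(z,t)·(z',t') = (z+z', t+t'+2 Im⟨z,z'⟩)`. -/
def heisMul {n : ℕ} (u v : (Fin n → ℂ) × ℝ) : (Fin n → ℂ) × ℝ :=
  (u.1 + v.1, u.2 + v.2 + 2 * (∑ j, u.1 j * (starRingEnd ℂ) (v.1 j)).im)

/-- Group inverse on the Heisenberg group: `(z,t)⁻¹ = (−z,−t)`. -/
def heisInv {n : ℕ} (u : (Fin n → ℂ) × ℝ) : (Fin n → ℂ) × ℝ := (-u.1, -u.2)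

/-- Homogeneous norm `N(z,t) = (|z|⁴ + t²)^{1/4}`. -/
def heisNorm {n : ℕ} (u : (Fin n → ℂ) × ℝ) : ℝ :=
  (znormSq u.1 ^ 2 + u.2 ^ 2) ^ ((1 : ℝ) / 4)

/-- The Cayley transform `𝒞 : ℂⁿ × ℝ → ℂ^{n+1}`,
`𝒞(z,t) = ( 2z/(1+|z|²−it), (1−|z|²+it)/(1+|z|²−it) )`. -/
def cayley {n : ℕ} (u : (Fin n → ℂ) × ℝ) : Fin (n + 1) → ℂ :=
  Fin.snoc (fun j => 2 * u.1 j / (1 + (znormSq u.1 : ℂ) - u.2 * Complex.I))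
    ((1 - (znormSq u.1 : ℂ) + u.2 * Complex.I) / (1 + (znormSq u.1 : ℂ) - u.2 * Complex.I))

/-! With the complex gauge `A(z,t) = |z|² + it` one has `|A(u)| = N(u)²`, `A(u⁻¹) = conj A(u)` and
`A(uv) = A(u) + A(v) + 2⟨z,z'⟩`, so `A(u⁻¹v) = conj A(u) + A(v) - 2⟨z,z'⟩`. The Cayley transform is
`𝒞(u) = (2z, 1 - conj A(u)) / conj (1 + A(u))`, and expanding the Hermitian product gives
`1 - ⟨𝒞(u), 𝒞(v)⟩ = 2 A(u⁻¹v) / (conj (1 + A(u)) (1 + A(v)))`. Taking moduli, with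
`|1 + A(z,t)|² = (1 + |z|²)² + t²`, yields the factorization. -/

open ComplexConjugate

def hermDot {m : ℕ} (z w : Fin m → ℂ) : ℂ := ∑ j, z j * conj (w j)

def heisGauge {n : ℕ} (u : (Fin n → ℂ) × ℝ) : ℂ := znormSq u.1 + u.2 * I

lemma znormSq_nonneg {n : ℕ} (z : Fin n → ℂ) : 0 ≤ znormSq z :=
  Finset.sum_nonneg fun j _ => normSq_nonneg (z j)

lemma znormSq_neg {n : ℕ} (z : Fin n → ℂ) : znormSq (-z) = znormSq z := by
  simp [znormSq]

lemma znormSq_add {n : ℕ} (z w : Fin n → ℂ) :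
    znormSq (z + w) = znormSq z + znormSq w + 2 * (hermDot z w).re := by
  simp only [znormSq, hermDot, Pi.add_apply, normSq_add, re_sum, Finset.mul_sum,
    Finset.sum_add_distrib]

lemma hermDot_neg_left {m : ℕ} (z w : Fin m → ℂ) : hermDot (-z) w = -hermDot z w := by
  simp [hermDot]

lemma hermDot_const_mul {m : ℕ} (a b : ℂ) (z w : Fin m → ℂ) :
    hermDot (fun j => a * z j) (fun j => b * w j) = a * conj b * hermDot z w := by
  simp only [hermDot, map_mul, Finset.mul_sum]
  exact Finset.sum_congr rfl fun j _ => by ring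

lemma hermDot_snoc {m : ℕ} (z w : Fin m → ℂ) (a b : ℂ) :
    hermDot (Fin.snoc z a : Fin (m + 1) → ℂ) (Fin.snoc w b) = hermDot z w + a * conj b := by
  simp [hermDot, Fin.sum_univ_castSucc]

lemma heisGauge_heisMul {n : ℕ} (u v : (Fin n → ℂ) × ℝ) :
    heisGauge (heisMul u v) = heisGauge u + heisGauge v + 2 * hermDot u.1 v.1 := by
  apply Complex.ext <;> simp [heisGauge, heisMul, znormSq_add, hermDot]

lemma heisGauge_heisInv {n : ℕ} (u : (Fin n → ℂ) × ℝ) :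
    heisGauge (heisInv u) = conj (heisGauge u) := by
  apply Complex.ext <;> simp [heisGauge, heisInv, znormSq_neg]

lemma norm_heisGauge {n : ℕ} (u : (Fin n → ℂ) × ℝ) : ‖heisGauge u‖ = heisNorm u ^ 2 := by
  rw [heisNorm, ← Real.rpow_natCast, ← Real.rpow_mul (by positivity), norm_eq_sqrt_sq_add_sq,
    Real.sqrt_eq_rpow]
  norm_num [heisGauge]

lemma one_add_heisGauge_ne_zero {n : ℕ} (u : (Fin n → ℂ) × ℝ) : 1 + heisGauge u ≠ 0 := by
  apply ne_of_apply_ne re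
  simpa [heisGauge] using (by linarith [znormSq_nonneg u.1] : 1 + znormSq u.1 ≠ 0)

lemma cayley_eq {n : ℕ} (u : (Fin n → ℂ) × ℝ) :
    cayley u = Fin.snoc (fun j => 2 / conj (1 + heisGauge u) * u.1 j)
      ((1 - conj (heisGauge u)) / conj (1 + heisGauge u)) := by
  have hden : 1 + (znormSq u.1 : ℂ) - u.2 * I = conj (1 + heisGauge u) := by
    apply Complex.ext <;> simp [heisGauge]
  have hnum : 1 - (znormSq u.1 : ℂ) + u.2 * I = 1 - conj (heisGauge u) := by
    apply Complex.ext <;> simp [heisGauge]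
  simp only [cayley, hden, hnum, div_mul_eq_mul_div]

lemma one_sub_hermDot_cayley {n : ℕ} (u v : (Fin n → ℂ) × ℝ) :
    1 - hermDot (cayley u) (cayley v) =
      2 * heisGauge (heisMul (heisInv u) v) / (conj (1 + heisGauge u) * (1 + heisGauge v)) := by
  have hu : 1 + conj (heisGauge u) ≠ 0 := by
    simpa using (map_ne_zero conj).2 (one_add_heisGauge_ne_zero u)
  have hv := one_add_heisGauge_ne_zero v
  rw [cayley_eq, cayley_eq, hermDot_snoc, hermDot_const_mul, heisGauge_heisMul, heisGauge_heisInv,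
    heisInv, hermDot_neg_left]
  simp only [map_div₀, map_sub, map_add, map_one, map_ofNat, conj_conj]
  field_simp
  ring

lemma norm_one_add_heisGauge {n : ℕ} (u : (Fin n → ℂ) × ℝ) :
    ‖1 + heisGauge u‖ = √((1 + znormSq u.1) ^ 2 + u.2 ^ 2) := by
  simp [norm_eq_sqrt_sq_add_sq, heisGauge]

theorem cayley_kernel_factorization_general (n : ℕ)
    (z z' : Fin n → ℂ) (t t' : ℝ) :
    ‖1 - ∑ j, cayley (z, t) j * (starRingEnd ℂ) (cayley (z', t') j)‖ =
      2 * heisNorm (heisMul (heisInv (z, t)) (z', t')) ^ 2 *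
        ((1 + znormSq z) ^ 2 + t ^ 2) ^ (-(1 / 2) : ℝ) *
        ((1 + znormSq z') ^ 2 + t' ^ 2) ^ (-(1 / 2) : ℝ) := by
  change ‖1 - hermDot (cayley (z, t)) (cayley (z', t'))‖ = _
  rw [one_sub_hermDot_cayley, norm_div, norm_mul, norm_mul, norm_conj, norm_heisGauge,
    norm_one_add_heisGauge, norm_one_add_heisGauge, Real.rpow_neg (by positivity),
    Real.rpow_neg (by positivity), ← Real.sqrt_eq_rpow, ← Real.sqrt_eq_rpow, Complex.norm_two]
  ring

/-- **Conformal factorization of the spherical kernel through the Cayley transform:**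
for all `u = (z,t)`, `v = (z',t')` in `ℂⁿ × ℝ`,
`|1 − ⟨𝒞(u), 𝒞(v)⟩| = 2 N(u⁻¹v)² ((1+|z|²)²+t²)^{−1/2} ((1+|z'|²)²+t'²)^{−1/2}`. -/
theorem cayley_kernel_factorization (n : ℕ) (hn : 1 ≤ n)
    (z z' : Fin n → ℂ) (t t' : ℝ) :
    ‖1 - ∑ j, cayley (z, t) j * (starRingEnd ℂ) (cayley (z', t') j)‖ =
      2 * heisNorm (heisMul (heisInv (z, t)) (z', t')) ^ 2 *
        ((1 + znormSq z) ^ 2 + t ^ 2) ^ (-(1 / 2) : ℝ) *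
        ((1 + znormSq z') ^ 2 + t' ^ 2) ^ (-(1 / 2) : ℝ) :=
  cayley_kernel_factorization_general n z z' t t'

end
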